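/- arXiv:1601.02862 — 3 statements merged into one kernel-verified Lean document; each statement's English description precedes it below -/
import Mathlib

section
/- Let h : [0,1]² → ℝ be Lebesgue integrable and define f(x,y) = ∫₀ˣ (∫₀ʸ h(u,v) dv) du. Then there exists a measurable set A ⊆ [0,1] with μ(A) = 1 such that for every x₀ ∈ A and every y ∈ [0,1], the partial derivative f'_x(x₀,y) exists and equals ∫₀ʸ h(x₀,v) dv. -/
/-!
Extend `h` by zero outside the square. For fixed `y` the inner integral `u ↦ ∫₀ʸ h(u,v) dv` is
integrable, so by the Lebesgue differentiation theorem its primitive has derivative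
`∫₀ʸ h(x₀,v) dv` at almost every `x₀`; as ℚ is countable, almost every `x₀` works for all
rational `y` at once, for `h` and for `|h|`, and also has `h(x₀,·)` integrable. For arbitrary
`y` and rationals `q₁ ≤ y ≤ q₂`, the inner integrals at `y` and at `q₁` differ by at most
`∫_{q₁}^{q₂} |h(u,v)| dv`, whose primitive has derivative `∫_{q₁}^{q₂} |h(x₀,v)| dv` at `x₀`; this
is small for `q₁, q₂` close to `y`, so the derivative for `y` is approximated by those for `q₁`.
-/

open MeasureTheory Set Filter Topology Function

section Calculus

variable {𝕜 : Type*} [NontriviallyNormedField 𝕜] {F : Type*} [NormedAddCommGroup F]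
  [NormedSpace 𝕜 F]

theorem hasDerivAt_of_forall_approx {f : 𝕜 → F} {f' : F} {x : 𝕜}
    (h : ∀ ε > 0, ∃ (g : 𝕜 → F) (g' : F), HasDerivAt g g' x ∧ ‖f' - g'‖ ≤ ε ∧
      ∀ᶠ t in 𝓝 x, ‖f t - g t - (f x - g x)‖ ≤ ε * ‖t - x‖) :
    HasDerivAt f f' x := by
  refine hasDerivAt_iff_isLittleO.2 (Asymptotics.IsLittleO.of_bound fun c hc => ?_)
  obtain ⟨g, g', hg, hg', hfg⟩ := h (c / 3) (by positivity)
  filter_upwards [hg.isLittleO.bound (show 0 < c / 3 by positivity), hfg] with t hgt hfgt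
  calc ‖f t - f x - (t - x) • f'‖
      = ‖(g t - g x - (t - x) • g') + (f t - g t - (f x - g x)) - (t - x) • (f' - g')‖ := by
        rw [smul_sub]; congr 1; abel
    _ ≤ c / 3 * ‖t - x‖ + c / 3 * ‖t - x‖ + ‖t - x‖ * (c / 3) := by
        refine (norm_sub_le _ _).trans
          (add_le_add ((norm_add_le _ _).trans (add_le_add hgt hfgt)) ?_)
        rw [norm_smul]; gcongr
    _ = c * ‖t - x‖ := by ring

theorem HasDerivAt.eventually_norm_sub_le {f : 𝕜 → F} {f' : F} {x : 𝕜} (hf : HasDerivAt f f' x)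
    {r : ℝ} (hr : ‖f'‖ < r) : ∀ᶠ t in 𝓝 x, ‖f t - f x‖ ≤ r * ‖t - x‖ := by
  filter_upwards [hf.isLittleO.bound (sub_pos.2 hr)] with t ht
  calc ‖f t - f x‖ = ‖(f t - f x - (t - x) • f') + (t - x) • f'‖ := by rw [sub_add_cancel]
    _ ≤ (r - ‖f'‖) * ‖t - x‖ + ‖t - x‖ * ‖f'‖ :=
        (norm_add_le _ _).trans (add_le_add ht (norm_smul _ _).le)
    _ = r * ‖t - x‖ := by ring

end Calculus

theorem exists_measurableSet_subset_measure_eq_of_ae {α : Type*} [MeasurableSpace α]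
    {μ : Measure α} {p : α → Prop} {s : Set α} (hs : MeasurableSet s) (hp : ∀ᵐ x ∂μ, p x) :
    ∃ A ⊆ s, MeasurableSet A ∧ μ A = μ s ∧ ∀ x ∈ A, p x := by
  obtain ⟨t, ht, htm, htp⟩ := hp.exists_measurable_mem
  exact ⟨s ∩ t, inter_subset_left, hs.inter htm, measure_inter_conull (mem_ae_iff.1 ht),
    fun x hx => htp x hx.2⟩

section InnerIntegral

variable {E : Type*} [NormedAddCommGroup E] [NormedSpace ℝ E]

theorem MeasureTheory.Integrable.intervalIntegral_prod_left {α : Type*} [MeasurableSpace α]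
    {μ : Measure α} [SFinite μ] {ν : Measure ℝ} [SFinite ν] {K : α → ℝ → E}
    (hK : Integrable (uncurry K) (μ.prod ν)) (a b : ℝ) :
    Integrable (fun u => ∫ v in a..b, K u v ∂ν) μ := by
  have hIoc (c d : ℝ) : Integrable (fun u => ∫ v in Ioc c d, K u v ∂ν) μ := by
    refine Integrable.integral_prod_left (f := uncurry K) ?_
    rw [← Measure.restrict_univ (μ := μ), Measure.prod_restrict]
    exact hK.integrableOn
  exact (hIoc a b).sub (hIoc b a)

theorem exists_rat_le_le_norm_integral_lt {φ : ℝ → E} (hφ : Integrable φ) (y : ℝ) {ε : ℝ}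
    (hε : 0 < ε) : ∃ q₁ q₂ : ℚ, q₁ ≤ y ∧ y ≤ q₂ ∧ ‖∫ v in q₁..q₂, φ v‖ < ε := by
  have hφi (a b : ℝ) : IntervalIntegrable φ volume a b := hφ.intervalIntegrable
  obtain ⟨δ, hδ, hball⟩ := Metric.continuousAt_iff.1
    ((intervalIntegral.continuous_primitive hφi y).continuousAt (x := y)) (ε / 2) (half_pos hε)
  simp only [intervalIntegral.integral_same, dist_zero_right] at hball
  obtain ⟨q₁, hq₁, hq₁y⟩ := exists_rat_btwn (sub_lt_self y hδ)
  obtain ⟨q₂, hyq₂, hq₂⟩ := exists_rat_btwn (lt_add_of_pos_right y hδ)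
  refine ⟨q₁, q₂, hq₁y.le, hyq₂.le, ?_⟩
  rw [← intervalIntegral.integral_interval_sub_left (hφi y q₂) (hφi y q₁)]
  calc _ ≤ ‖∫ v in y..q₂, φ v‖ + ‖∫ v in y..q₁, φ v‖ := norm_sub_le _ _
    _ < ε / 2 + ε / 2 := by
        gcongr <;> refine hball ?_ <;> rw [Real.dist_eq, abs_lt] <;> constructor <;> linarith
    _ = ε := add_halves ε

theorem norm_integral_sub_integral_le {φ : ℝ → E} (hφ : Integrable φ) {q₁ y q₂ : ℝ}
    (h₁ : q₁ ≤ y) (h₂ : y ≤ q₂) :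
    ‖(∫ v in 0..y, φ v) - ∫ v in 0..q₁, φ v‖ ≤ (∫ v in 0..q₂, ‖φ v‖) - ∫ v in 0..q₁, ‖φ v‖ := by
  rw [intervalIntegral.integral_interval_sub_left hφ.intervalIntegrable hφ.intervalIntegrable,
    intervalIntegral.integral_interval_sub_left hφ.norm.intervalIntegrable
      hφ.norm.intervalIntegrable]
  exact (intervalIntegral.norm_integral_le_integral_norm h₁).trans
    (intervalIntegral.integral_mono_interval le_rfl h₁ h₂
      (Eventually.of_forall fun _ => norm_nonneg _) hφ.norm.intervalIntegrable)

theorem norm_primitive_sub_primitive_le {a b : ℝ → E} {c : ℝ → ℝ} (ha : Integrable a)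
    (hb : Integrable b) (hc : Integrable c) (habc : ∀ᵐ u, ‖a u - b u‖ ≤ c u) (x t : ℝ) :
    ‖(∫ u in 0..t, a u) - (∫ u in 0..t, b u) - ((∫ u in 0..x, a u) - ∫ u in 0..x, b u)‖ ≤
      |(∫ u in 0..t, c u) - ∫ u in 0..x, c u| := by
  have hab : Integrable fun u => a u - b u := ha.sub hb
  rw [← intervalIntegral.integral_sub ha.intervalIntegrable hb.intervalIntegrable,
    ← intervalIntegral.integral_sub ha.intervalIntegrable hb.intervalIntegrable,
    intervalIntegral.integral_interval_sub_left hab.intervalIntegrable hab.intervalIntegrable,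
    intervalIntegral.integral_interval_sub_left hc.intervalIntegrable hc.intervalIntegrable]
  exact intervalIntegral.norm_integral_le_abs_of_norm_le (ae_restrict_of_ae habc)
    hc.intervalIntegrable

theorem hasDerivAt_integral_integral_of_forall_rat {K : ℝ → ℝ → E}
    (hK : Integrable (uncurry K)) {x : ℝ} (hx : Integrable (K x))
    (hrat : ∀ q : ℚ, HasDerivAt (fun t => ∫ u in 0..t, ∫ v in 0..q, K u v) (∫ v in 0..q, K x v) x)
    (hrat_norm : ∀ q : ℚ,
      HasDerivAt (fun t => ∫ u in 0..t, ∫ v in 0..q, ‖K u v‖) (∫ v in 0..q, ‖K x v‖) x)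
    (y : ℝ) :
    HasDerivAt (fun t => ∫ u in 0..t, ∫ v in 0..y, K u v) (∫ v in 0..y, K x v) x := by
  have hKn : Integrable (uncurry fun u v => ‖K u v‖) := hK.norm
  refine hasDerivAt_of_forall_approx fun ε hε => ?_
  obtain ⟨q₁, q₂, hq₁, hq₂, hq⟩ := exists_rat_le_le_norm_integral_lt hx.norm y hε
  set c : ℝ → ℝ := fun u => (∫ v in 0..q₂, ‖K u v‖) - ∫ v in 0..q₁, ‖K u v‖
  have hc_int : Integrable c :=
    (hKn.intervalIntegral_prod_left 0 q₂).sub (hKn.intervalIntegral_prod_left 0 q₁)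
  have hc : HasDerivAt (fun t => ∫ u in 0..t, c u) (c x) x :=
    ((hrat_norm q₂).sub (hrat_norm q₁)).congr_of_eventuallyEq <| Eventually.of_forall fun t =>
      intervalIntegral.integral_sub (hKn.intervalIntegral_prod_left 0 q₂).intervalIntegrable
        (hKn.intervalIntegral_prod_left 0 q₁).intervalIntegrable
  have hc_lt : ‖c x‖ < ε := by
    rwa [show c x = ∫ v in q₁..q₂, ‖K x v‖ from intervalIntegral.integral_interval_sub_left
      hx.norm.intervalIntegrable hx.norm.intervalIntegrable]
  refine ⟨_, _, hrat q₁,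
    (norm_integral_sub_integral_le hx hq₁ hq₂).trans ((Real.le_norm_self _).trans hc_lt.le), ?_⟩
  filter_upwards [hc.eventually_norm_sub_le hc_lt] with t ht
  refine (norm_primitive_sub_primitive_le (hK.intervalIntegral_prod_left 0 y)
    (hK.intervalIntegral_prod_left 0 q₁) hc_int ?_ x t).trans ?_
  · filter_upwards [hK.prod_right_ae] with u hu
    exact norm_integral_sub_integral_le hu hq₁ hq₂
  · rwa [← Real.norm_eq_abs]

variable [CompleteSpace E]

theorem ae_forall_rat_hasDerivAt_integral_integral {K : ℝ → ℝ → E}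
    (hK : Integrable (uncurry K)) :
    ∀ᵐ x, ∀ q : ℚ, HasDerivAt (fun t => ∫ u in 0..t, ∫ v in 0..q, K u v) (∫ v in 0..q, K x v) x :=
  ae_all_iff.2 fun q =>
    (LocallyIntegrable.ae_hasDerivAt_integral
      (hK.intervalIntegral_prod_left 0 q).locallyIntegrable).mono fun _ hx => hx 0

theorem ae_forall_hasDerivAt_integral_integral {K : ℝ → ℝ → E}
    (hK : Integrable (uncurry K)) :
    ∀ᵐ x, ∀ y, HasDerivAt (fun t => ∫ u in 0..t, ∫ v in 0..y, K u v) (∫ v in 0..y, K x v) x := by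
  filter_upwards [hK.prod_right_ae, ae_forall_rat_hasDerivAt_integral_integral hK,
    ae_forall_rat_hasDerivAt_integral_integral (K := fun u v => ‖K u v‖) hK.norm]
    with x hx hrat hrat_norm
  exact hasDerivAt_integral_integral_of_forall_rat hK hx hrat hrat_norm

end InnerIntegral

/-- If `h` is Lebesgue integrable on `[0,1]²` and
`f(x,y) = ∫₀ˣ (∫₀ʸ h(u,v) dv) du`, then there is a measurable set `A ⊆ [0,1]` of full
measure such that for all `x₀ ∈ A` and `y ∈ [0,1]` the partial derivative of `f` with
respect to the first variable at `x₀` exists and equals `∫₀ʸ h(x₀,v) dv`. -/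
theorem stmt0 (h : ℝ → ℝ → ℝ)
    (hint : IntegrableOn (fun p : ℝ × ℝ => h p.1 p.2) (Icc (0:ℝ) 1 ×ˢ Icc (0:ℝ) 1) volume)
    (f : ℝ → ℝ → ℝ)
    (hf : ∀ x ∈ Icc (0:ℝ) 1, ∀ y ∈ Icc (0:ℝ) 1,
      f x y = ∫ u in (0:ℝ)..x, ∫ v in (0:ℝ)..y, h u v) :
    ∃ A ⊆ Icc (0:ℝ) 1, MeasurableSet A ∧ volume A = 1 ∧
      ∀ x₀ ∈ A, ∀ y ∈ Icc (0:ℝ) 1,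
        HasDerivWithinAt (fun t => f t y) (∫ v in (0:ℝ)..y, h x₀ v) (Icc (0:ℝ) 1) x₀ := by
  set H : ℝ → ℝ → ℝ := fun u v => (Icc (0:ℝ) 1 ×ˢ Icc (0:ℝ) 1).indicator (uncurry h) (u, v)
  have hH : Integrable (uncurry H) :=
    (integrable_indicator_iff (measurableSet_Icc.prod measurableSet_Icc)).2 hint
  have hHh : ∀ u ∈ Icc (0:ℝ) 1, ∀ y ∈ Icc (0:ℝ) 1, ∫ v in 0..y, H u v = ∫ v in 0..y, h u v :=
    fun u hu y hy => intervalIntegral.integral_congr fun v hv =>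
      indicator_of_mem (mk_mem_prod hu (uIcc_subset_Icc (left_mem_Icc.2 zero_le_one) hy hv)) _
  have hfH : ∀ y ∈ Icc (0:ℝ) 1,
      EqOn (fun t => f t y) (fun t => ∫ u in 0..t, ∫ v in 0..y, H u v) (Icc 0 1) :=
    fun y hy t ht => (hf t ht y hy).trans <| intervalIntegral.integral_congr fun u hu =>
      (hHh u (uIcc_subset_Icc (left_mem_Icc.2 zero_le_one) ht hu) y hy).symm
  obtain ⟨A, hA, hAm, hAμ, hAder⟩ :=
    exists_measurableSet_subset_measure_eq_of_ae measurableSet_Icc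
      (ae_forall_hasDerivAt_integral_integral hH)
  refine ⟨A, hA, hAm, by simpa using hAμ, fun x₀ hx₀ y hy => ?_⟩
  rw [← hHh x₀ (hA hx₀) y hy]
  exact (hAder x₀ hx₀ y).hasDerivWithinAt.congr (hfH y hy) (hfH y hy (hA hx₀))
end

section
/- Let Y ⊆ ℝ and f : [0,1] × Y → ℝ be such that (a) for every x ∈ [0,1], the function y ↦ f(x,y) is continuous on Y; (b) for every (x,y) ∈ [0,1] × Y the partial derivative f'_x(x,y) exists; and (c) f'_x is continuous with respect to x uniformly in y, i.e. for every ε > 0 there exists δ > 0 such that |f'_x(x,y) − f'_x(x',y)| < ε for all x, x' ∈ [0,1] with |x − x'| < δ and all y ∈ Y. Then the function (x,y) ↦ f'_x(x,y) is jointly continuous on [0,1] × Y. -/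
/-!
For fixed `x₀`, the difference quotients `(f x · - f x₀ ·) / (x - x₀)` are continuous on `Y` and,
by the mean value inequality applied to `t ↦ f t y - t * fx x₀ y`, they converge to `fx x₀ ·`
uniformly on `Y` as `x → x₀`; hence `fx x₀ ·` is continuous on `Y`. Joint continuity follows
because `fx x · → fx x₀ ·` uniformly on `Y` as `x → x₀`.
-/

open Filter Topology Function Set

theorem nhdsWithin_Icc_diff_singleton_neBot {α : Type*} [LinearOrder α] [TopologicalSpace α]
    [OrderTopology α] [DenselyOrdered α] {a b x : α} (hab : a < b) (hx : x ∈ Icc a b) :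
    (𝓝[Icc a b \ {x}] x).NeBot := by
  rcases hx.2.lt_or_eq with hxb | rfl
  · exact (left_nhdsWithin_Ioo_neBot hxb).mono <| nhdsWithin_mono _ fun y hy =>
      ⟨⟨hx.1.trans hy.1.le, hy.2.le⟩, hy.1.ne'⟩
  · exact (right_nhdsWithin_Ioo_neBot hab).mono <| nhdsWithin_mono _ fun y hy =>
      ⟨Ioo_subset_Icc_self hy, hy.2.ne⟩

theorem continuousWithinAt_uncurry_of_tendstoUniformlyOn {α β γ : Type*} [TopologicalSpace α]
    [TopologicalSpace β] [UniformSpace γ] {F : α → β → γ} {s : Set α} {t : Set β} {x₀ : α}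
    {y₀ : β} (hF : TendstoUniformlyOn F (F x₀) (𝓝[s] x₀) t)
    (hc : ContinuousWithinAt (F x₀) t y₀) :
    ContinuousWithinAt (uncurry F) (s ×ˢ t) (x₀, y₀) := by
  have hfst : Tendsto Prod.fst (𝓝[s ×ˢ t] (x₀, y₀)) (𝓝[s] x₀) :=
    continuousWithinAt_fst.tendsto_nhdsWithin fun _ hp => hp.1
  have hsnd : Tendsto Prod.snd (𝓝[s ×ˢ t] (x₀, y₀)) (𝓝[t] y₀) :=
    continuousWithinAt_snd.tendsto_nhdsWithin fun _ hp => hp.2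
  exact TendstoUniformlyOn.tendsto_comp (F := fun p : α × β => F p.1)
    (fun u hu => hfst.eventually (hF u hu)) hc hsnd

section Slope

variable {E : Type*} [NormedAddCommGroup E] [NormedSpace ℝ E]

theorem Convex.norm_slope_sub_le_of_norm_hasDerivWithin_sub_le {f f' : ℝ → E} {s : Set ℝ}
    {v : E} {C a b : ℝ} (hs : Convex ℝ s) (hf : ∀ x ∈ s, HasDerivWithinAt f (f' x) s x)
    (bound : ∀ x ∈ s, ‖f' x - v‖ ≤ C) (ha : a ∈ s) (hb : b ∈ s) (hab : a ≠ b) :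
    ‖slope f a b - v‖ ≤ C := by
  have hg : ∀ x ∈ s, HasDerivWithinAt (fun x => f x - x • v) (f' x - v) s x := fun x hx =>
    (hf x hx).sub (by simpa using (hasDerivWithinAt_id x s).smul_const v)
  have mvt := hs.norm_image_sub_le_of_norm_hasDerivWithin_le hg bound ha hb
  have hba : b - a ≠ 0 := sub_ne_zero.2 hab.symm
  have key : slope f a b - v = (b - a)⁻¹ • (f b - b • v - (f a - a • v)) := by
    rw [slope_def_module, show f b - b • v - (f a - a • v) = f b - f a - (b - a) • v by
      rw [sub_smul]; abel, smul_sub _ (f b - f a), inv_smul_smul₀ hba]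
  rw [key, norm_smul, norm_inv, inv_mul_le_iff₀ (norm_pos_iff.2 hba), mul_comm]
  exact mvt

theorem tendstoUniformlyOn_slope_of_tendstoUniformlyOn_deriv {α : Type*} {f f' : ℝ → α → E}
    {s : Set ℝ} {t : Set α} {x₀ : ℝ} (hs : Convex ℝ s) (hx₀ : x₀ ∈ s)
    (hf : ∀ x ∈ s, ∀ y ∈ t, HasDerivWithinAt (f · y) (f' x y) s x)
    (hf' : TendstoUniformlyOn f' (f' x₀) (𝓝[s] x₀) t) :
    TendstoUniformlyOn (fun x y => slope (f · y) x₀ x) (f' x₀) (𝓝[s \ {x₀}] x₀) t := by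
  rw [Metric.tendstoUniformlyOn_iff] at hf' ⊢
  intro ε hε
  obtain ⟨δ, hδ, hclose⟩ := Metric.mem_nhdsWithin_iff.1 (hf' (ε / 2) (half_pos hε))
  filter_upwards [inter_mem_nhdsWithin (s \ {x₀}) (Metric.ball_mem_nhds x₀ hδ)]
    with x ⟨⟨hxs, hxx₀⟩, hxδ⟩ y hy
  have hslope := ((convex_ball x₀ δ).inter hs).norm_slope_sub_le_of_norm_hasDerivWithin_sub_le
    (fun z hz => (hf z hz.2 y hy).mono inter_subset_right)
    (fun z hz => by rw [← dist_eq_norm, dist_comm]; exact (hclose hz y hy).le)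
    ⟨Metric.mem_ball_self hδ, hx₀⟩ ⟨hxδ, hxs⟩ (Ne.symm hxx₀)
  rw [dist_comm, dist_eq_norm]
  linarith

theorem continuousOn_of_tendstoUniformlyOn_deriv {α : Type*} [TopologicalSpace α]
    {f f' : ℝ → α → E} {s : Set ℝ} {t : Set α} {x₀ : ℝ} (hs : Convex ℝ s) (hx₀ : x₀ ∈ s)
    [(𝓝[s \ {x₀}] x₀).NeBot]
    (hcont : ∀ x ∈ s, ContinuousOn (f x) t)
    (hf : ∀ x ∈ s, ∀ y ∈ t, HasDerivWithinAt (f · y) (f' x y) s x)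
    (hf' : TendstoUniformlyOn f' (f' x₀) (𝓝[s] x₀) t) :
    ContinuousOn (f' x₀) t := by
  have hslope : ∀ᶠ x in 𝓝[s \ {x₀}] x₀, ContinuousOn (fun y => slope (f · y) x₀ x) t := by
    filter_upwards [self_mem_nhdsWithin] with x hx
    exact ((hcont x hx.1).sub (hcont x₀ hx₀)).const_smul _
  exact (tendstoUniformlyOn_slope_of_tendstoUniformlyOn_deriv hs hx₀ hf hf').continuousOn
    hslope.frequently

end Slope

/-- If `f : [0,1] × Y → ℝ` is continuous in `y`, has a partial derivative
`fx` with respect to the first variable everywhere, and `fx` is continuous in `x`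
uniformly in `y`, then `fx` is jointly continuous on `[0,1] × Y`. -/
theorem stmt2 (Y : Set ℝ) (f fx : ℝ → ℝ → ℝ)
    (hcont : ∀ x ∈ Icc (0:ℝ) 1, ContinuousOn (fun y => f x y) Y)
    (hderiv : ∀ x ∈ Icc (0:ℝ) 1, ∀ y ∈ Y,
      HasDerivWithinAt (fun t => f t y) (fx x y) (Icc (0:ℝ) 1) x)
    (hunif : ∀ ε > 0, ∃ δ > 0, ∀ x ∈ Icc (0:ℝ) 1, ∀ x' ∈ Icc (0:ℝ) 1,
      |x - x'| < δ → ∀ y ∈ Y, |fx x y - fx x' y| < ε) :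
    ContinuousOn (fun p : ℝ × ℝ => fx p.1 p.2) (Icc (0:ℝ) 1 ×ˢ Y) := by
  have hfx : ∀ x₀ ∈ Icc (0:ℝ) 1, TendstoUniformlyOn fx (fx x₀) (𝓝[Icc 0 1] x₀) Y := by
    intro x₀ hx₀
    rw [Metric.tendstoUniformlyOn_iff]
    intro ε hε
    obtain ⟨δ, hδ, hclose⟩ := hunif ε hε
    filter_upwards [self_mem_nhdsWithin, mem_nhdsWithin_of_mem_nhds (Metric.ball_mem_nhds x₀ hδ)]
      with x hx hxδ y hy
    rw [dist_comm, Real.dist_eq]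
    exact hclose x hx x₀ hx₀ hxδ y hy
  rintro ⟨x₀, y₀⟩ ⟨hx₀, hy₀⟩
  have := nhdsWithin_Icc_diff_singleton_neBot zero_lt_one hx₀
  exact continuousWithinAt_uncurry_of_tendstoUniformlyOn (hfx x₀ hx₀)
    (continuousOn_of_tendstoUniformlyOn_deriv (convex_Icc 0 1) hx₀ hcont hderiv (hfx x₀ hx₀)
      y₀ hy₀)
end

section
/- Let Y ⊆ ℝ and f : [0,1] × Y → ℝ be such that (a) for every x ∈ [0,1], the function y ↦ f(x,y) is continuous on Y; (b) for every (x,y) ∈ [0,1] × Y the second partial derivative f''_{xx}(x,y) exists (i.e. for each y ∈ Y the function x ↦ f(x,y) is twice differentiable on [0,1]); and (c) sup_{y ∈ Y} ∫₀¹ (f''_{xx}(x,y))² dx < ∞. Then the function (x,y) ↦ f'_x(x,y) is jointly continuous on [0,1] × Y. -/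
/-!
Since `‖∂ₓₓf(·, y)‖₂ ≤ C` uniformly in `y`, Cauchy–Schwarz makes the functions `∂ₓf(·, y)`
uniformly `1/2`-Hölder, hence equicontinuous in `x`. By the mean value inequality and this
equicontinuity, difference quotients of `f` over short intervals around `x₀` (continuous in `y`)
converge to `∂ₓf(x₀, y)` uniformly in `y`, so `∂ₓf(x₀, ·)` is continuous. Continuity in `y` at
fixed `x` together with equicontinuity in `x` gives joint continuity.
-/

open MeasureTheory Set Filter Topology
open scoped ENNReal

theorem lintegral_ofReal_abs_le_of_lintegral_sq_le {α : Type*} [MeasurableSpace α]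
    {μ : Measure α} {g : α → ℝ} (hg : AEMeasurable g μ) {M : ℝ≥0∞}
    (hM : ∫⁻ x, ENNReal.ofReal (g x ^ 2) ∂μ ≤ M) :
    ∫⁻ x, ENNReal.ofReal |g x| ∂μ ≤ M ^ (1 / 2 : ℝ) * μ univ ^ (1 / 2 : ℝ) := by
  have hsq : ∀ x, ENNReal.ofReal |g x| ^ (2 : ℝ) = ENNReal.ofReal (g x ^ 2) := fun x => by
    rw [ENNReal.ofReal_rpow_of_nonneg (abs_nonneg _) zero_le_two, Real.rpow_two, sq_abs]
  have h := ENNReal.lintegral_mul_le_Lp_mul_Lq μ Real.HolderConjugate.two_two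
    (ENNReal.measurable_ofReal.comp_aemeasurable hg.abs) aemeasurable_const (g := fun _ => 1)
  simp only [Pi.mul_apply, Function.comp_apply, mul_one, ENNReal.one_rpow, lintegral_one,
    hsq] at h
  exact h.trans (by gcongr)

theorem aemeasurable_of_hasDerivWithinAt_Icc {g g' : ℝ → ℝ} {a b : ℝ}
    (hd : ∀ x ∈ Icc a b, HasDerivWithinAt g (g' x) (Icc a b) x) :
    AEMeasurable g' (volume.restrict (Icc a b)) := by
  rw [← restrict_Ioo_eq_restrict_Icc]
  refine (measurable_deriv g).aemeasurable.congr ?_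
  filter_upwards [ae_restrict_mem measurableSet_Ioo] with x hx
  exact ((hd x (Ioo_subset_Icc_self hx)).hasDerivAt (Icc_mem_nhds hx.1 hx.2)).deriv

theorem abs_sub_le_of_lintegral_deriv_sq_le_of_le {g g' : ℝ → ℝ} {a b : ℝ} {M : ℝ≥0∞}
    (hab : a ≤ b) (hd : ∀ x ∈ Icc a b, HasDerivWithinAt g (g' x) (Icc a b) x)
    (hM : ∫⁻ x in Icc a b, ENNReal.ofReal (g' x ^ 2) ≤ M) (hMtop : M ≠ ⊤) :
    |g b - g a| ≤ √M.toReal * √(b - a) := by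
  have hL1 := lintegral_ofReal_abs_le_of_lintegral_sq_le
    (aemeasurable_of_hasDerivWithinAt_Icc hd) hM
  rw [Measure.restrict_apply_univ, Real.volume_Icc] at hL1
  have hfin : M ^ (1 / 2 : ℝ) * ENNReal.ofReal (b - a) ^ (1 / 2 : ℝ) ≠ ⊤ := by
    finiteness
  have hint : IntegrableOn g' (Icc a b) := by
    refine ⟨(aemeasurable_of_hasDerivWithinAt_Icc hd).aestronglyMeasurable, ?_⟩
    rw [hasFiniteIntegral_iff_norm]
    simpa only [Real.norm_eq_abs] using hL1.trans_lt hfin.lt_top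
  have hftc : ∫ x in a..b, g' x = g b - g a :=
    intervalIntegral.integral_eq_sub_of_hasDeriv_right_of_le hab
      (fun x hx => (hd x hx).continuousWithinAt)
      (fun x hx => ((hd x (Ioo_subset_Icc_self hx)).hasDerivAt
        (Icc_mem_nhds hx.1 hx.2)).hasDerivWithinAt)
      ((intervalIntegrable_iff_integrableOn_Icc_of_le hab).2 hint)
  calc |g b - g a| = |∫ x in a..b, g' x| := by rw [hftc]
    _ ≤ ∫ x in Icc a b, |g' x| := by
      rw [intervalIntegral.integral_of_le hab, ← integral_Icc_eq_integral_Ioc]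
      exact abs_integral_le_integral_abs
    _ = (∫⁻ x in Icc a b, ENNReal.ofReal |g' x|).toReal :=
      integral_eq_lintegral_of_nonneg_ae (.of_forall fun _ => abs_nonneg _)
        hint.abs.aestronglyMeasurable
    _ ≤ (M ^ (1 / 2 : ℝ) * ENNReal.ofReal (b - a) ^ (1 / 2 : ℝ)).toReal :=
      ENNReal.toReal_mono hfin hL1
    _ = √M.toReal * √(b - a) := by
      rw [ENNReal.toReal_mul, ← ENNReal.toReal_rpow, ← ENNReal.toReal_rpow,
        ENNReal.toReal_ofReal (sub_nonneg.2 hab), Real.sqrt_eq_rpow, Real.sqrt_eq_rpow]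

theorem abs_sub_le_of_lintegral_deriv_sq_le {g g' : ℝ → ℝ} {a b u v : ℝ} {M : ℝ≥0∞}
    (hd : ∀ x ∈ Icc a b, HasDerivWithinAt g (g' x) (Icc a b) x)
    (hM : ∫⁻ x in Icc a b, ENNReal.ofReal (g' x ^ 2) ≤ M) (hMtop : M ≠ ⊤)
    (hu : u ∈ Icc a b) (hv : v ∈ Icc a b) :
    |g v - g u| ≤ √M.toReal * √|v - u| := by
  wlog huv : u ≤ v generalizing u v
  · rw [abs_sub_comm, abs_sub_comm v]
    exact this hv hu (le_of_not_ge huv)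
  have hsub : Icc u v ⊆ Icc a b := Icc_subset_Icc hu.1 hv.2
  rw [abs_of_nonneg (sub_nonneg.2 huv)]
  exact abs_sub_le_of_lintegral_deriv_sq_le_of_le huv
    (fun x hx => (hd x (hsub hx)).mono hsub) ((lintegral_mono_set hsub).trans hM) hMtop

theorem abs_div_sub_le_of_abs_deriv_sub_le {F g : ℝ → ℝ} {a b m K : ℝ} (hab : a < b)
    (hd : ∀ x ∈ Icc a b, HasDerivWithinAt F (g x) (Icc a b) x)
    (hg : ∀ x ∈ Icc a b, |g x - m| ≤ K) :
    |(F b - F a) / (b - a) - m| ≤ K := by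
  have h := norm_image_sub_le_of_norm_deriv_le_segment' (f := fun x => F x - x * m)
    (fun x hx => (hd x hx).sub ((hasDerivWithinAt_id x _).mul_const m))
    (fun x hx => by simpa using hg x (Ico_subset_Icc_self hx)) b (right_mem_Icc.2 hab.le)
  have hba : 0 < b - a := sub_pos.2 hab
  rw [Real.norm_eq_abs, show F b - b * m - (F a - a * m) = (b - a) * ((F b - F a) / (b - a) - m)
    by field_simp; ring, abs_mul, abs_of_pos hba] at h
  exact le_of_mul_le_mul_left (by linarith) hba

theorem continuousOn_partialDeriv_of_modulus {β : Type*} [TopologicalSpace β]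
    {f f' : ℝ → β → ℝ} {Y : Set β} {a b x₀ : ℝ} (hab : a < b) (hx₀ : x₀ ∈ Icc a b)
    (hf : ∀ x ∈ Icc a b, ContinuousOn (f x) Y)
    (hd : ∀ x ∈ Icc a b, ∀ y ∈ Y, HasDerivWithinAt (fun t => f t y) (f' x y) (Icc a b) x)
    (ω : ℝ → ℝ) (hω : Tendsto ω (𝓝[Icc a b] x₀) (𝓝 0))
    (hf' : ∀ y ∈ Y, ∀ x ∈ Icc a b, |f' x y - f' x₀ y| ≤ ω x) :
    ContinuousOn (f' x₀) Y := by
  refine continuousOn_of_uniform_approx_of_continuousOn fun u hu => ?_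
  obtain ⟨ε, hε, hεu⟩ := Metric.mem_uniformity_dist.1 hu
  obtain ⟨δ, hδ, hωδ⟩ := Metric.tendsto_nhdsWithin_nhds.1 hω (ε / 2) (half_pos hε)
  -- `f' x₀` is uniformly `ε`-close to the difference quotient of `f` over some `[c, c + η] ∋ x₀`
  set η := min (δ / 2) (b - a)
  have hη : 0 < η := lt_min (half_pos hδ) (sub_pos.2 hab)
  set c := min x₀ (b - η)
  have hηδ : η ≤ δ / 2 := min_le_left _ _
  have hηba : η ≤ b - a := min_le_right _ _
  have hc : c ≤ x₀ ∧ c ≤ b - η := ⟨min_le_left _ _, min_le_right _ _⟩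
  have hx₀c : x₀ ≤ c + η := by
    rcases min_choice x₀ (b - η) with h | h <;> linarith [hx₀.2]
  have hsub : Icc c (c + η) ⊆ Icc a b :=
    Icc_subset_Icc (le_min hx₀.1 (by linarith)) (by linarith)
  have hclose : ∀ x ∈ Icc c (c + η), dist x x₀ < δ := fun x hx => by
    rw [Real.dist_eq, abs_lt]
    constructor <;> linarith [hx.1, hx.2]
  refine ⟨fun y => (f (c + η) y - f c y) / (c + η - c), ?_, fun y hy => hεu ?_⟩
  · exact ((hf _ (hsub (right_mem_Icc.2 (by linarith)))).sub
      (hf _ (hsub (left_mem_Icc.2 (by linarith))))).div_const _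
  · rw [dist_comm, Real.dist_eq]
    refine (abs_div_sub_le_of_abs_deriv_sub_le (by linarith)
      (fun x hx => (hd x (hsub hx) y hy).mono hsub) (fun x hx => ?_)).trans_lt (half_lt_self hε)
    exact (hf' y hy x (hsub hx)).trans ((le_abs_self _).trans
      (by simpa using (hωδ (hsub hx) (hclose x hx)).le))

theorem continuousWithinAt_uncurry_of_modulus {α β E : Type*} [TopologicalSpace α]
    [TopologicalSpace β] [PseudoMetricSpace E] {F : α → β → E} {s : Set α} {t : Set β}
    {x₀ : α} {y₀ : β} (ω : α → ℝ) (hω : Tendsto ω (𝓝[s] x₀) (𝓝 0))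
    (hF : ∀ y ∈ t, ∀ x ∈ s, dist (F x y) (F x₀ y) ≤ ω x)
    (hy₀ : ContinuousWithinAt (F x₀) t y₀) :
    ContinuousWithinAt (Function.uncurry F) (s ×ˢ t) (x₀, y₀) := by
  rw [ContinuousWithinAt, nhdsWithin_prod_eq, Metric.tendsto_nhds]
  intro ε hε
  have hx : ∀ᶠ x in 𝓝[s] x₀, x ∈ s ∧ ω x < ε / 2 :=
    (eventually_mem_nhdsWithin (a := x₀)).and (hω.eventually (gt_mem_nhds (half_pos hε)))
  have hy : ∀ᶠ y in 𝓝[t] y₀, y ∈ t ∧ dist (F x₀ y) (F x₀ y₀) < ε / 2 :=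
    (eventually_mem_nhdsWithin (a := y₀)).and (Metric.tendsto_nhds.1 hy₀ _ (half_pos hε))
  filter_upwards [hx.prod_mk hy] with ⟨x, y⟩ ⟨⟨hxs, hωx⟩, hyt, hdy⟩
  calc dist (F x y) (F x₀ y₀) ≤ dist (F x y) (F x₀ y) + dist (F x₀ y) (F x₀ y₀) :=
        dist_triangle _ _ _
    _ < ε := by linarith [hF y hyt x hxs]

/-- If `f : [0,1] × Y → ℝ` is continuous in `y`, twice differentiable in `x`
with first and second partial derivatives `fx` and `fxx`, and
`sup_{y ∈ Y} ∫₀¹ (fxx x y)² dx < ∞`, then `fx` is jointly continuous on `[0,1] × Y`. -/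
theorem stmt4 (Y : Set ℝ) (f fx fxx : ℝ → ℝ → ℝ)
    (hcont : ∀ x ∈ Icc (0:ℝ) 1, ContinuousOn (fun y => f x y) Y)
    (hderiv1 : ∀ x ∈ Icc (0:ℝ) 1, ∀ y ∈ Y,
      HasDerivWithinAt (fun t => f t y) (fx x y) (Icc (0:ℝ) 1) x)
    (hderiv2 : ∀ x ∈ Icc (0:ℝ) 1, ∀ y ∈ Y,
      HasDerivWithinAt (fun t => fx t y) (fxx x y) (Icc (0:ℝ) 1) x)
    (hbound : (⨆ y ∈ Y, ∫⁻ x in Icc (0:ℝ) 1, ENNReal.ofReal ((fxx x y) ^ 2)) < ⊤) :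
    ContinuousOn (fun p : ℝ × ℝ => fx p.1 p.2) (Icc (0:ℝ) 1 ×ˢ Y) := by
  set M := ⨆ y ∈ Y, ∫⁻ x in Icc (0:ℝ) 1, ENNReal.ofReal ((fxx x y) ^ 2)
  rintro ⟨x₀, y₀⟩ ⟨hx₀, hy₀⟩
  set ω : ℝ → ℝ := fun x => √M.toReal * √|x - x₀|
  have hω : Tendsto ω (𝓝[Icc 0 1] x₀) (𝓝 0) := by
    have h : ContinuousWithinAt ω (Icc 0 1) x₀ := by fun_prop
    simpa [ContinuousWithinAt, ω] using h
  have hmod : ∀ y ∈ Y, ∀ x ∈ Icc (0:ℝ) 1, |fx x y - fx x₀ y| ≤ ω x := fun y hy x hx =>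
    abs_sub_le_of_lintegral_deriv_sq_le (fun t ht => hderiv2 t ht y hy)
      (le_biSup (fun y => ∫⁻ x in Icc (0:ℝ) 1, ENNReal.ofReal ((fxx x y) ^ 2)) hy)
      hbound.ne hx₀ hx
  exact continuousWithinAt_uncurry_of_modulus ω hω
    (fun y hy x hx => (Real.dist_eq _ _).trans_le (hmod y hy x hx))
    (continuousOn_partialDeriv_of_modulus zero_lt_one hx₀ hcont hderiv1 ω hω hmod y₀ hy₀)
end
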